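/- Let F₁ and F₂ be cumulative distribution functions of Borel probability measures supported on [a₁,b₁] and [a₂,b₂] respectively, with left-continuous quantile functions q₁, q₂. Let M be the pushforward of the Lebesgue measure on [0,1] under the map u ↦ (q₁(u), q₂(u)) (the monotone, or comonotone, coupling). Then: (i) M has marginal distributions F₁ and F₂; (ii) the joint CDF of M is (x,y) ↦ min(F₁(x), F₂(y)); and (iii) every Borel probability measure μ on [a₁,b₁] × [a₂,b₂] with marginals F₁ and F₂ satisfies ∫ h dM ≥ ∫ h dμ for every bounded measurable supermodular h, i.e. the monotone coupling is maximal in the supermodular order among all couplings of (F₁, F₂). -/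

import Mathlib

/-!
The marginals and the joint CDF of the monotone coupling follow from the Galois connection
`quantile μ u ≤ x ↔ u ≤ cdf μ x` for `u ∈ (0, 1)`, which is where right-continuity of the CDF
enters.

For the supermodular order, subtracting from `h` its values on the two upper edges of the box
leaves a 2-increasing function `k` that vanishes on those edges; its integral differs from that of
`h` by a quantity depending only on the marginals. Rounding both coordinates up to finite grids
turns `k` into a nonnegative combination of indicators of orthants `Iic (s, t)` (Abel summation),
whose integral is monotone in the joint CDF, and the joint CDF of every coupling is at most
`min (F₁ x) (F₂ y)`. The rounding error is dominated by the rounding errors of the antitone sections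
`k · a₂` and `k a₁ ·`, whose integrals only involve the marginals; grids exhausting the rationals
and the jumps of these sections make them tend to zero by dominated convergence.
-/

open MeasureTheory ProbabilityTheory Set Filter Topology

section RoundUp

variable {α : Type*} [LinearOrder α]

noncomputable def roundUp (T : Finset α) (b x : α) : α :=
  if h : (T.filter (x ≤ ·)).Nonempty then (T.filter (x ≤ ·)).min' h else b

noncomputable def nextAbove (T : Finset α) (b s : α) : α :=
  roundUp (T.filter (s < ·)) b s

variable {T : Finset α} {b x : α}

theorem roundUp_of_forall_lt (h : ∀ t ∈ T, t < x) : roundUp T b x = b := by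
  rw [roundUp, dif_neg]
  rintro ⟨t, ht⟩
  rw [Finset.mem_filter] at ht
  exact (h t ht.1).not_ge ht.2

theorem roundUp_mem_filter (h : ∃ t ∈ T, x ≤ t) : roundUp T b x ∈ T.filter (x ≤ ·) := by
  obtain ⟨t, ht, hxt⟩ := h
  rw [roundUp, dif_pos ⟨t, Finset.mem_filter.2 ⟨ht, hxt⟩⟩]
  exact Finset.min'_mem _ _

theorem roundUp_mem_insert : roundUp T b x ∈ insert b T := by
  by_cases h : ∃ t ∈ T, x ≤ t
  · exact Finset.mem_insert_of_mem (Finset.mem_of_mem_filter _ (roundUp_mem_filter h))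
  · push Not at h
    rw [roundUp_of_forall_lt h]
    exact Finset.mem_insert_self _ _

theorem le_roundUp (hx : x ≤ b) : x ≤ roundUp T b x := by
  by_cases h : ∃ t ∈ T, x ≤ t
  · exact (Finset.mem_filter.1 (roundUp_mem_filter h)).2
  · push Not at h
    rwa [roundUp_of_forall_lt h]

theorem roundUp_le {t : α} (ht : t ∈ T) (hxt : x ≤ t) : roundUp T b x ≤ t := by
  have hmem : t ∈ T.filter (x ≤ ·) := Finset.mem_filter.2 ⟨ht, hxt⟩
  rw [roundUp, dif_pos ⟨t, hmem⟩]
  exact Finset.min'_le _ _ hmem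

theorem roundUp_eq_self (hx : x ∈ T) (hxb : x ≤ b) : roundUp T b x = x :=
  (roundUp_le hx le_rfl).antisymm (le_roundUp hxb)

theorem roundUp_mem_Icc {a : α} (hT : ↑T ⊆ Icc a b) (hab : a ≤ b) : roundUp T b x ∈ Icc a b := by
  rcases Finset.mem_insert.1 (roundUp_mem_insert (T := T) (b := b) (x := x)) with h | h
  · rw [h]; exact ⟨hab, le_rfl⟩
  · exact hT h

theorem le_nextAbove {s : α} (hs : s ≤ b) : s ≤ nextAbove T b s := le_roundUp hs

theorem nextAbove_mem_Icc {a s : α} (hT : ↑T ⊆ Icc a b) (hab : a ≤ b) :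
    nextAbove T b s ∈ Icc a b :=
  roundUp_mem_Icc ((Finset.coe_subset.2 (Finset.filter_subset _ _)).trans hT) hab

theorem monotone_roundUp (hT : ∀ t ∈ T, t ≤ b) : Monotone (roundUp T b) := by
  intro x y hxy
  by_cases h : ∃ t ∈ T, y ≤ t
  · have hy := Finset.mem_filter.1 (roundUp_mem_filter (b := b) h)
    exact roundUp_le hy.1 (hxy.trans hy.2)
  · push Not at h
    rw [roundUp_of_forall_lt h]
    rcases Finset.mem_insert.1 (roundUp_mem_insert (T := T) (b := b) (x := x)) with hx | hx
    · exact hx.le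
    · exact hT _ hx

theorem roundUp_insert_of_forall_lt {s : Finset α} {a : α} (ha : ∀ t ∈ s, a < t) :
    roundUp (insert a s) b x = if x ≤ a then a else roundUp s b x := by
  split_ifs with hxa
  · refine (roundUp_le (Finset.mem_insert_self a s) hxa).antisymm ?_
    have hmem := Finset.mem_of_mem_filter _ (roundUp_mem_filter (b := b)
      ⟨a, Finset.mem_insert_self a s, hxa⟩)
    rcases Finset.mem_insert.1 hmem with h | h
    · exact h.ge
    · exact (ha _ h).le
  · simp only [roundUp, Finset.filter_insert, if_neg hxa]

theorem roundUp_eq_roundUp_of_forall_lt {s : Finset α} {a : α} (ha : ∀ t ∈ s, a < t)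
    (hxa : x ≤ a) : roundUp s b x = roundUp s b a := by
  simp only [roundUp, Finset.filter_true_of_mem fun t ht => (ha t ht).le,
    Finset.filter_true_of_mem fun t ht => hxa.trans (ha t ht).le]

theorem apply_roundUp_eq_add_sum {M : Type*} [AddCommGroup M] (φ : α → M) (T : Finset α)
    (b x : α) :
    φ (roundUp T b x) = φ b + ∑ s ∈ T, if x ≤ s then φ s - φ (nextAbove T b s) else 0 := by
  induction T using Finset.induction_on_min with
  | empty => simp [roundUp_of_forall_lt]
  | insert a s ha ih =>
    have hnext : ∀ t ∈ s, nextAbove (insert a s) b t = nextAbove s b t := fun t ht => by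
      simp only [nextAbove, Finset.filter_insert, if_neg (ha t ht).not_gt]
    have hnext_a : nextAbove (insert a s) b a = roundUp s b a := by
      simp only [nextAbove, Finset.filter_insert, lt_irrefl, if_false, Finset.filter_true_of_mem ha]
    rw [Finset.sum_insert fun h => lt_irrefl a (ha a h),
      Finset.sum_congr rfl fun t ht => by rw [hnext t ht], roundUp_insert_of_forall_lt ha, hnext_a]
    split_ifs with hxa
    · rw [← roundUp_eq_roundUp_of_forall_lt ha hxa, ih]
      abel
    · rw [ih, zero_add]

theorem apply_roundUp_roundUp_eq_sum {β M : Type*} [LinearOrder β] [AddCommGroup M]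
    (k : α → β → M) (T₁ : Finset α) (T₂ : Finset β) (b₁ : α) (b₂ : β)
    (hk₁ : ∀ y, k b₁ y = 0) (hk₂ : ∀ x, k x b₂ = 0) (x : α) (y : β) :
    k (roundUp T₁ b₁ x) (roundUp T₂ b₂ y) = ∑ s ∈ T₁, ∑ t ∈ T₂,
      (Iic (s, t)).indicator (fun _ => k s t - k (nextAbove T₁ b₁ s) t
        - k s (nextAbove T₂ b₂ t) + k (nextAbove T₁ b₁ s) (nextAbove T₂ b₂ t)) (x, y) := by
  have hx := apply_roundUp_eq_add_sum (fun x' => k x' (roundUp T₂ b₂ y)) T₁ b₁ x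
  simp only [hk₁, zero_add] at hx
  rw [hx]
  refine Finset.sum_congr rfl fun s _ => ?_
  have hy := apply_roundUp_eq_add_sum (fun y' => k s y' - k (nextAbove T₁ b₁ s) y') T₂ b₂ y
  simp only [hk₂, sub_zero, zero_add] at hy
  rw [hy]
  split_ifs with hxs
  · refine Finset.sum_congr rfl fun t _ => ?_
    simp only [Set.indicator_apply, mem_Iic, Prod.mk_le_mk, hxs, true_and]
    split_ifs <;> abel
  · simp [hxs]

end RoundUp

section TwoIncreasing

variable {α β : Type*}

def TwoIncreasingOn [Preorder α] [Preorder β] (k : α → β → ℝ) (s : Set α) (t : Set β) : Prop :=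
  ∀ ⦃x⦄, x ∈ s → ∀ ⦃x'⦄, x' ∈ s → ∀ ⦃y⦄, y ∈ t → ∀ ⦃y'⦄, y' ∈ t → x ≤ x' → y ≤ y' →
    0 ≤ k x y - k x' y - k x y' + k x' y'

def SupermodularOn {γ : Type*} [Lattice γ] (h : γ → ℝ) (s : Set γ) : Prop :=
  ∀ p ∈ s, ∀ q ∈ s, h p + h q ≤ h (p ⊔ q) + h (p ⊓ q)

def mixedDiff (h : α × β → ℝ) (b : α × β) (x : α) (y : β) : ℝ :=
  h (x, y) - h (x, b.2) - h (b.1, y) + h b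

theorem SupermodularOn.twoIncreasingOn [Lattice α] [Lattice β] {h : α × β → ℝ} {s : Set α}
    {t : Set β} (hh : SupermodularOn h (s ×ˢ t)) : TwoIncreasingOn (fun x y => h (x, y)) s t := by
  intro x hx x' hx' y hy y' hy' hxx' hyy'
  have := hh (x', y) ⟨hx', hy⟩ (x, y') ⟨hx, hy'⟩
  simp only [Prod.mk_sup_mk, Prod.mk_inf_mk, sup_eq_left.2 hxx', sup_eq_right.2 hyy',
    inf_eq_right.2 hxx', inf_eq_left.2 hyy'] at this
  linarith

theorem mixedDiff_fst_self (h : α × β → ℝ) (b : α × β) (y : β) : mixedDiff h b b.1 y = 0 := by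
  simp [mixedDiff]

theorem mixedDiff_snd_self (h : α × β → ℝ) (b : α × β) (x : α) : mixedDiff h b x b.2 = 0 := by
  simp [mixedDiff]

theorem TwoIncreasingOn.mixedDiff [Preorder α] [Preorder β] {h : α × β → ℝ} {s : Set α}
    {t : Set β} (hh : TwoIncreasingOn (fun x y => h (x, y)) s t) (b : α × β) :
    TwoIncreasingOn (mixedDiff h b) s t := by
  intro x hx x' hx' y hy y' hy' hxx' hyy'
  have := hh hx hx' hy hy' hxx' hyy'
  simp only [_root_.mixedDiff] at this ⊢
  linarith

theorem abs_mixedDiff_le {h : α × β → ℝ} {C : ℝ} (hC : ∀ p, |h p| ≤ C) (b : α × β) (x : α)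
    (y : β) : |mixedDiff h b x y| ≤ 4 * C := by
  have := hC (x, y); have := hC (x, b.2); have := hC (b.1, y); have := hC b
  simp only [mixedDiff, abs_le] at *
  constructor <;> linarith

variable [Preorder α] [Preorder β] {k : α → β → ℝ} {a₁ b₁ x x' : α} {a₂ b₂ y y' : β}

theorem TwoIncreasingOn.apply_le_apply (hk : TwoIncreasingOn k (Icc a₁ b₁) (Icc a₂ b₂))
    (hk₁ : ∀ y, k b₁ y = 0) (hk₂ : ∀ x, k x b₂ = 0) (hx : x ∈ Icc a₁ b₁) (hx' : x' ∈ Icc a₁ b₁)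
    (hy : y ∈ Icc a₂ b₂) (hy' : y' ∈ Icc a₂ b₂) (hxx' : x ≤ x') (hyy' : y ≤ y') :
    k x' y' ≤ k x y := by
  have h₁ := hk hx hx' hy' ⟨hy'.1.trans hy'.2, le_rfl⟩ hxx' hy'.2
  have h₂ := hk hx ⟨hx.1.trans hx.2, le_rfl⟩ hy hy' hx.2 hyy'
  rw [hk₂, hk₂] at h₁
  rw [hk₁, hk₁] at h₂
  linarith

theorem TwoIncreasingOn.sub_le_add (hk : TwoIncreasingOn k (Icc a₁ b₁) (Icc a₂ b₂))
    (hx : x ∈ Icc a₁ b₁) (hx' : x' ∈ Icc a₁ b₁) (hy : y ∈ Icc a₂ b₂) (hy' : y' ∈ Icc a₂ b₂)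
    (hxx' : x ≤ x') (hyy' : y ≤ y') :
    k x y - k x' y' ≤ (k x a₂ - k x' a₂) + (k a₁ y - k a₁ y') := by
  have h₁ := hk hx hx' ⟨le_rfl, hy.1.trans hy.2⟩ hy hxx' hy.1
  have h₂ := hk ⟨le_rfl, hx'.1.trans hx'.2⟩ hx' hy hy' hx'.1 hyy'
  linarith

end TwoIncreasing

section Coupling

variable {α β : Type*} [MeasurableSpace α] [MeasurableSpace β]

def IsCoupling (γ : Measure (α × β)) (μ₁ : Measure α) (μ₂ : Measure β) : Prop :=
  γ.map Prod.fst = μ₁ ∧ γ.map Prod.snd = μ₂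

variable {γ : Measure (α × β)} {μ₁ : Measure α} {μ₂ : Measure β}

theorem IsCoupling.integral_comp_fst (hγ : IsCoupling γ μ₁ μ₂) {φ : α → ℝ} (hφ : Measurable φ) :
    ∫ p, φ p.1 ∂γ = ∫ x, φ x ∂μ₁ := by
  rw [← hγ.1, integral_map measurable_fst.aemeasurable hφ.aestronglyMeasurable]

theorem IsCoupling.integral_comp_snd (hγ : IsCoupling γ μ₁ μ₂) {φ : β → ℝ} (hφ : Measurable φ) :
    ∫ p, φ p.2 ∂γ = ∫ y, φ y ∂μ₂ := by
  rw [← hγ.2, integral_map measurable_snd.aemeasurable hφ.aestronglyMeasurable]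

theorem IsCoupling.ae_fst (hγ : IsCoupling γ μ₁ μ₂) {P : α → Prop} (hP : ∀ᵐ x ∂μ₁, P x) :
    ∀ᵐ p ∂γ, P p.1 :=
  ae_of_ae_map measurable_fst.aemeasurable (hγ.1 ▸ hP)

theorem IsCoupling.ae_snd (hγ : IsCoupling γ μ₁ μ₂) {P : β → Prop} (hP : ∀ᵐ y ∂μ₂, P y) :
    ∀ᵐ p ∂γ, P p.2 :=
  ae_of_ae_map measurable_snd.aemeasurable (hγ.2 ▸ hP)

theorem IsCoupling.real_Iic_le [Preorder α] [Preorder β] [IsFiniteMeasure γ]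
    (hγ : IsCoupling γ μ₁ μ₂) (x : α) (y : β) (hx : MeasurableSet (Iic x))
    (hy : MeasurableSet (Iic y)) :
    γ.real (Iic (x, y)) ≤ min (μ₁.real (Iic x)) (μ₂.real (Iic y)) := by
  rw [← hγ.1, ← hγ.2, map_measureReal_apply measurable_fst hx,
    map_measureReal_apply measurable_snd hy]
  exact le_min (measureReal_mono fun p hp => hp.1) (measureReal_mono fun p hp => hp.2)

theorem IsCoupling.ae_mem_Icc [Preorder α] [Preorder β] (hγ : IsCoupling γ μ₁ μ₂) {a₁ b₁ : α}
    {a₂ b₂ : β} (hμ₁ : μ₁ (Icc a₁ b₁)ᶜ = 0) (hμ₂ : μ₂ (Icc a₂ b₂)ᶜ = 0) :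
    ∀ᵐ p ∂γ, p.1 ∈ Icc a₁ b₁ ∧ p.2 ∈ Icc a₂ b₂ :=
  (hγ.ae_fst (mem_ae_iff.2 hμ₁)).and (hγ.ae_snd (mem_ae_iff.2 hμ₂))

end Coupling

theorem Measurable.integrable_of_abs_le {α : Type*} [MeasurableSpace α] {μ : Measure α}
    [IsFiniteMeasure μ] {f : α → ℝ} (hf : Measurable f) {C : ℝ} (hC : ∀ x, |f x| ≤ C) :
    Integrable f μ :=
  .of_bound hf.aestronglyMeasurable C (ae_of_all _ hC)

theorem integral_roundUp_roundUp_eq_sum {k : ℝ → ℝ → ℝ} {b₁ b₂ : ℝ} (hk₁ : ∀ y, k b₁ y = 0)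
    (hk₂ : ∀ x, k x b₂ = 0) (T₁ T₂ : Finset ℝ) (γ : Measure (ℝ × ℝ)) [IsFiniteMeasure γ] :
    ∫ p, k (roundUp T₁ b₁ p.1) (roundUp T₂ b₂ p.2) ∂γ = ∑ s ∈ T₁, ∑ t ∈ T₂,
      γ.real (Iic (s, t)) * (k s t - k (nextAbove T₁ b₁ s) t
        - k s (nextAbove T₂ b₂ t) + k (nextAbove T₁ b₁ s) (nextAbove T₂ b₂ t)) := by
  simp_rw [apply_roundUp_roundUp_eq_sum k T₁ T₂ b₁ b₂ hk₁ hk₂, Prod.mk.eta]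
  rw [integral_finsetSum _ fun s _ => integrable_finsetSum _ fun t _ =>
    (integrable_const _).indicator measurableSet_Iic]
  refine Finset.sum_congr rfl fun s _ => ?_
  rw [integral_finsetSum _ fun t _ => (integrable_const _).indicator measurableSet_Iic]
  simp_rw [integral_indicator_const _ measurableSet_Iic, smul_eq_mul]

theorem integral_roundUp_roundUp_mono {k : ℝ → ℝ → ℝ} {a₁ b₁ a₂ b₂ : ℝ}
    (hk : TwoIncreasingOn k (Icc a₁ b₁) (Icc a₂ b₂)) (hk₁ : ∀ y, k b₁ y = 0)
    (hk₂ : ∀ x, k x b₂ = 0) {T₁ T₂ : Finset ℝ} (hT₁ : ↑T₁ ⊆ Icc a₁ b₁) (hT₂ : ↑T₂ ⊆ Icc a₂ b₂)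
    {γ γ' : Measure (ℝ × ℝ)} [IsFiniteMeasure γ] [IsFiniteMeasure γ']
    (hcdf : ∀ p, γ.real (Iic p) ≤ γ'.real (Iic p)) :
    ∫ p, k (roundUp T₁ b₁ p.1) (roundUp T₂ b₂ p.2) ∂γ ≤
      ∫ p, k (roundUp T₁ b₁ p.1) (roundUp T₂ b₂ p.2) ∂γ' := by
  rw [integral_roundUp_roundUp_eq_sum hk₁ hk₂, integral_roundUp_roundUp_eq_sum hk₁ hk₂]
  refine Finset.sum_le_sum fun s hs => Finset.sum_le_sum fun t ht => ?_
  have hs' : s ∈ Icc a₁ b₁ := hT₁ hs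
  have ht' : t ∈ Icc a₂ b₂ := hT₂ ht
  exact mul_le_mul_of_nonneg_right (hcdf _) (hk hs' (nextAbove_mem_Icc hT₁ (hs'.1.trans hs'.2))
    ht' (nextAbove_mem_Icc hT₂ (ht'.1.trans ht'.2)) (le_nextAbove hs'.2) (le_nextAbove ht'.2))

theorem AntitoneOn.abs_le_of_mem_Icc {g : ℝ → ℝ} {a b y : ℝ} (hg : AntitoneOn g (Icc a b))
    (hy : y ∈ Icc a b) : |g y| ≤ |g a| + |g b| := by
  have h₁ := hg ⟨le_rfl, hy.1.trans hy.2⟩ hy hy.1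
  have h₂ := hg hy ⟨hy.1.trans hy.2, le_rfl⟩ hy.2
  rw [abs_le]
  constructor <;> linarith [neg_abs_le (g b), le_abs_self (g a), abs_nonneg (g a),
    abs_nonneg (g b)]

theorem Set.Countable.exists_finset_seq {α : Type*} {S : Set α} (hS : S.Countable) :
    ∃ T : ℕ → Finset α, (∀ n, ↑(T n) ⊆ S) ∧ ∀ t ∈ S, ∀ᶠ n in atTop, t ∈ T n := by
  classical
  rcases S.eq_empty_or_nonempty with rfl | hne
  · exact ⟨fun _ => ∅, fun _ => by simp, by simp⟩
  obtain ⟨s, rfl⟩ := hS.exists_eq_range hne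
  refine ⟨fun n => (Finset.range n).image s, fun n t ht => ?_, ?_⟩
  · obtain ⟨i, -, rfl⟩ := Finset.mem_image.1 ht
    exact mem_range_self i
  · rintro _ ⟨i, rfl⟩
    exact eventually_atTop.2 ⟨i + 1, fun n hn =>
      Finset.mem_image_of_mem _ (Finset.mem_range.2 (by omega))⟩

theorem tendsto_roundUp_of_rat_mem {T : ℕ → Finset ℝ} {x b : ℝ} (hxb : x < b)
    (hT : ∀ r : ℚ, x < r → (r : ℝ) ≤ b → ∀ᶠ n in atTop, (r : ℝ) ∈ T n) :
    Tendsto (fun n => roundUp (T n) b x) atTop (𝓝 x) := by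
  refine tendsto_order.2 ⟨fun c hc => .of_forall fun n => hc.trans_le (le_roundUp hxb.le),
    fun c hc => ?_⟩
  obtain ⟨r, hxr, hrc⟩ := exists_rat_btwn (lt_min hc hxb)
  filter_upwards [hT r hxr (hrc.trans_le (min_le_right _ _)).le] with n hn
  exact (roundUp_le hn hxr.le).trans_lt (hrc.trans_le (min_le_left _ _))

theorem tendsto_integral_sub_comp_roundUp {g : ℝ → ℝ} {a b : ℝ} (hab : a ≤ b)
    (hg : AntitoneOn g (Icc a b)) (hgm : Measurable g) {ν : Measure ℝ} [IsFiniteMeasure ν]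
    (hν : ν (Icc a b)ᶜ = 0) {T : ℕ → Finset ℝ} (hT : ∀ n, ↑(T n) ⊆ Icc a b)
    (hconv : ∀ x ∈ Icc a b, Tendsto (fun n => g (roundUp (T n) b x)) atTop (𝓝 (g x))) :
    Tendsto (fun n => ∫ x, (g x - g (roundUp (T n) b x)) ∂ν) atTop (𝓝 0) := by
  rw [← integral_zero ℝ ℝ]
  have hae : ∀ᵐ x ∂ν, x ∈ Icc a b := mem_ae_iff.2 hν
  refine tendsto_integral_of_dominated_convergence (fun _ => 2 * (|g a| + |g b|))
    (fun n => (hgm.sub (hgm.comp (monotone_roundUp fun t ht =>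
      (hT n ht).2).measurable)).aestronglyMeasurable)
    (integrable_const _) (fun n => ?_) ?_
  · filter_upwards [hae] with x hx
    rw [Real.norm_eq_abs, two_mul]
    exact (abs_sub _ _).trans (add_le_add (hg.abs_le_of_mem_Icc hx)
      (hg.abs_le_of_mem_Icc (roundUp_mem_Icc (hT n) hab)))
  · filter_upwards [hae] with x hx
    simpa using (hconv x hx).const_sub (g x)

theorem exists_tendsto_integral_sub_comp_roundUp {g : ℝ → ℝ} {a b : ℝ} (hab : a ≤ b)
    (hg : AntitoneOn g (Icc a b)) (hgm : Measurable g) {ν : Measure ℝ} [IsFiniteMeasure ν]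
    (hν : ν (Icc a b)ᶜ = 0) :
    ∃ T : ℕ → Finset ℝ, (∀ n, ↑(T n) ⊆ Icc a b) ∧
      Tendsto (fun n => ∫ x, (g x - g (roundUp (T n) b x)) ∂ν) atTop (𝓝 0) := by
  set g' : ℝ → ℝ := fun x => g (projIcc a b hab x)
  have hg' : Antitone g' := fun x y hxy =>
    hg (projIcc a b hab x).2 (projIcc a b hab y).2 (monotone_projIcc hab hxy)
  have hg'g : ∀ x ∈ Icc a b, g' x = g x := fun x hx => by simp only [g', projIcc_of_mem hab hx]
  -- the grids must contain the jumps of `g`, where rounding up cannot converge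
  set S : Set ℝ := insert b (Icc a b ∩ (range ((↑) : ℚ → ℝ) ∪ {x | ¬ContinuousAt g' x}))
  have hSI : S ⊆ Icc a b := insert_subset ⟨hab, le_rfl⟩ inter_subset_left
  have hS : S.Countable :=
    (((countable_range ((↑) : ℚ → ℝ)).union hg'.countable_not_continuousAt).mono
      inter_subset_right).insert b
  obtain ⟨T, hTS, hT⟩ := hS.exists_finset_seq
  have hTI : ∀ n, ↑(T n) ⊆ Icc a b := fun n => (hTS n).trans hSI
  refine ⟨T, hTI, tendsto_integral_sub_comp_roundUp hab hg hgm hν hTI fun x hx => ?_⟩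
  by_cases hxS : x ∈ S
  · refine tendsto_const_nhds.congr' ?_
    filter_upwards [hT x hxS] with n hn
    rw [roundUp_eq_self hn hx.2]
  have hxb : x < b := hx.2.lt_of_ne fun h => hxS (h ▸ mem_insert b _)
  have hcont : ContinuousAt g' x := by_contra fun h => hxS (mem_insert_of_mem _ ⟨hx, Or.inr h⟩)
  have hρ := tendsto_roundUp_of_rat_mem hxb fun r hxr hrb =>
    hT r (mem_insert_of_mem _ ⟨⟨hx.1.trans hxr.le, hrb⟩, Or.inl (mem_range_self r)⟩)
  rw [← hg'g x hx]
  exact (hcont.tendsto.comp hρ).congr fun n => hg'g _ (roundUp_mem_Icc (hTI n) hab)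

section Comparison

variable {a₁ b₁ a₂ b₂ : ℝ} {μ₁ μ₂ : Measure ℝ} {γ : Measure (ℝ × ℝ)} [IsFiniteMeasure γ]
  {k : ℝ → ℝ → ℝ} {T₁ T₂ : Finset ℝ}

theorem integral_comp_roundUp_le (hk : TwoIncreasingOn k (Icc a₁ b₁) (Icc a₂ b₂))
    (hkm : Measurable (Function.uncurry k)) {C : ℝ} (hC : ∀ x y, |k x y| ≤ C)
    (hk₁ : ∀ y, k b₁ y = 0) (hk₂ : ∀ x, k x b₂ = 0) (hγ : IsCoupling γ μ₁ μ₂)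
    (hμ₁ : μ₁ (Icc a₁ b₁)ᶜ = 0) (hμ₂ : μ₂ (Icc a₂ b₂)ᶜ = 0)
    (hT₁ : ↑T₁ ⊆ Icc a₁ b₁) (hT₂ : ↑T₂ ⊆ Icc a₂ b₂) :
    ∫ p, k (roundUp T₁ b₁ p.1) (roundUp T₂ b₂ p.2) ∂γ ≤ ∫ p, k p.1 p.2 ∂γ := by
  have hρ₁ := (monotone_roundUp fun t ht => (hT₁ ht).2).measurable
  have hρ₂ := (monotone_roundUp fun t ht => (hT₂ ht).2).measurable
  refine integral_mono_ae
    ((hkm.comp ((hρ₁.comp measurable_fst).prodMk (hρ₂.comp measurable_snd))).integrable_of_abs_le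
      fun p => hC _ _)
    ((hkm.comp (measurable_fst.prodMk measurable_snd)).integrable_of_abs_le fun p => hC _ _) ?_
  filter_upwards [hγ.ae_mem_Icc hμ₁ hμ₂] with p ⟨hx, hy⟩
  exact hk.apply_le_apply hk₁ hk₂ hx (roundUp_mem_Icc hT₁ (hx.1.trans hx.2)) hy
    (roundUp_mem_Icc hT₂ (hy.1.trans hy.2)) (le_roundUp hx.2) (le_roundUp hy.2)

theorem integral_le_integral_comp_roundUp_add (hk : TwoIncreasingOn k (Icc a₁ b₁) (Icc a₂ b₂))
    (hkm : Measurable (Function.uncurry k)) {C : ℝ} (hC : ∀ x y, |k x y| ≤ C)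
    (hγ : IsCoupling γ μ₁ μ₂) (hμ₁ : μ₁ (Icc a₁ b₁)ᶜ = 0) (hμ₂ : μ₂ (Icc a₂ b₂)ᶜ = 0)
    (hT₁ : ↑T₁ ⊆ Icc a₁ b₁) (hT₂ : ↑T₂ ⊆ Icc a₂ b₂) :
    ∫ p, k p.1 p.2 ∂γ ≤ ∫ p, k (roundUp T₁ b₁ p.1) (roundUp T₂ b₂ p.2) ∂γ +
      (∫ x, (k x a₂ - k (roundUp T₁ b₁ x) a₂) ∂μ₁ +
        ∫ y, (k a₁ y - k a₁ (roundUp T₂ b₂ y)) ∂μ₂) := by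
  have hρ₁ := (monotone_roundUp fun t ht => (hT₁ ht).2).measurable
  have hρ₂ := (monotone_roundUp fun t ht => (hT₂ ht).2).measurable
  have hC₂ : ∀ x y x' y', |k x y - k x' y'| ≤ C + C := fun x y x' y' =>
    (abs_sub _ _).trans (add_le_add (hC x y) (hC x' y'))
  have he₁ : Measurable fun x => k x a₂ - k (roundUp T₁ b₁ x) a₂ :=
    (hkm.comp (measurable_id.prodMk measurable_const)).sub
      (hkm.comp (hρ₁.prodMk measurable_const))
  have he₂ : Measurable fun y => k a₁ y - k a₁ (roundUp T₂ b₂ y) :=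
    (hkm.comp (measurable_const.prodMk measurable_id)).sub
      (hkm.comp (measurable_const.prodMk hρ₂))
  have hkρ : Measurable fun p : ℝ × ℝ => k (roundUp T₁ b₁ p.1) (roundUp T₂ b₂ p.2) :=
    hkm.comp ((hρ₁.comp measurable_fst).prodMk (hρ₂.comp measurable_snd))
  have i₁ : Integrable (fun p : ℝ × ℝ => k p.1 a₂ - k (roundUp T₁ b₁ p.1) a₂) γ :=
    (he₁.comp measurable_fst).integrable_of_abs_le fun p => hC₂ _ _ _ _
  have i₂ : Integrable (fun p : ℝ × ℝ => k a₁ p.2 - k a₁ (roundUp T₂ b₂ p.2)) γ :=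
    (he₂.comp measurable_snd).integrable_of_abs_le fun p => hC₂ _ _ _ _
  have iρ : Integrable (fun p : ℝ × ℝ => k (roundUp T₁ b₁ p.1) (roundUp T₂ b₂ p.2)) γ :=
    hkρ.integrable_of_abs_le fun p => hC _ _
  have i₁₂ : Integrable (fun p : ℝ × ℝ =>
      (k p.1 a₂ - k (roundUp T₁ b₁ p.1) a₂) + (k a₁ p.2 - k a₁ (roundUp T₂ b₂ p.2))) γ :=
    i₁.add i₂
  rw [← hγ.integral_comp_fst he₁, ← hγ.integral_comp_snd he₂, ← integral_add i₁ i₂,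
    ← integral_add iρ i₁₂]
  refine integral_mono_ae
    ((hkm.comp (measurable_fst.prodMk measurable_snd)).integrable_of_abs_le fun p => hC _ _)
    (iρ.add i₁₂) ?_
  filter_upwards [hγ.ae_mem_Icc hμ₁ hμ₂] with p ⟨hx, hy⟩
  have := hk.sub_le_add hx (roundUp_mem_Icc hT₁ (hx.1.trans hx.2)) hy
    (roundUp_mem_Icc hT₂ (hy.1.trans hy.2)) (le_roundUp hx.2) (le_roundUp hy.2)
  linarith

theorem integral_le_integral_of_twoIncreasingOn (hab₁ : a₁ ≤ b₁) (hab₂ : a₂ ≤ b₂)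
    [IsFiniteMeasure μ₁] [IsFiniteMeasure μ₂] (hμ₁ : μ₁ (Icc a₁ b₁)ᶜ = 0)
    (hμ₂ : μ₂ (Icc a₂ b₂)ᶜ = 0) {γ' : Measure (ℝ × ℝ)} [IsFiniteMeasure γ']
    (hγ : IsCoupling γ μ₁ μ₂) (hγ' : IsCoupling γ' μ₁ μ₂)
    (hcdf : ∀ p, γ.real (Iic p) ≤ γ'.real (Iic p))
    (hk : TwoIncreasingOn k (Icc a₁ b₁) (Icc a₂ b₂)) (hkm : Measurable (Function.uncurry k))
    {C : ℝ} (hC : ∀ x y, |k x y| ≤ C) (hk₁ : ∀ y, k b₁ y = 0) (hk₂ : ∀ x, k x b₂ = 0) :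
    ∫ p, k p.1 p.2 ∂γ ≤ ∫ p, k p.1 p.2 ∂γ' := by
  have ha₁ : a₁ ∈ Icc a₁ b₁ := ⟨le_rfl, hab₁⟩
  have ha₂ : a₂ ∈ Icc a₂ b₂ := ⟨le_rfl, hab₂⟩
  obtain ⟨T₁, hT₁, hlim₁⟩ := exists_tendsto_integral_sub_comp_roundUp hab₁
    (fun x hx x' hx' hxx' => hk.apply_le_apply hk₁ hk₂ hx hx' ha₂ ha₂ hxx' le_rfl)
    (hkm.comp (measurable_id.prodMk measurable_const)) hμ₁
  obtain ⟨T₂, hT₂, hlim₂⟩ := exists_tendsto_integral_sub_comp_roundUp hab₂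
    (fun y hy y' hy' hyy' => hk.apply_le_apply hk₁ hk₂ ha₁ ha₁ hy hy' le_rfl hyy')
    (hkm.comp (measurable_const.prodMk measurable_id)) hμ₂
  refine le_of_tendsto_of_tendsto' tendsto_const_nhds
    ((tendsto_const_nhds.add (hlim₁.add hlim₂)).trans_eq (by rw [add_zero, add_zero])) fun n => ?_
  calc ∫ p, k p.1 p.2 ∂γ
      ≤ ∫ p, k (roundUp (T₁ n) b₁ p.1) (roundUp (T₂ n) b₂ p.2) ∂γ + _ :=
        integral_le_integral_comp_roundUp_add hk hkm hC hγ hμ₁ hμ₂ (hT₁ n) (hT₂ n)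
    _ ≤ ∫ p, k (roundUp (T₁ n) b₁ p.1) (roundUp (T₂ n) b₂ p.2) ∂γ' + _ := by
        gcongr 1
        exact integral_roundUp_roundUp_mono hk hk₁ hk₂ (hT₁ n) (hT₂ n) hcdf
    _ ≤ ∫ p, k p.1 p.2 ∂γ' + _ := by
        gcongr 1
        exact integral_comp_roundUp_le hk hkm hC hk₁ hk₂ hγ' hμ₁ hμ₂ (hT₁ n) (hT₂ n)

end Comparison

section Supermodular

variable {α β : Type*} [MeasurableSpace α] [MeasurableSpace β]

theorem Measurable.uncurry_mixedDiff {h : α × β → ℝ} (hh : Measurable h) (b : α × β) :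
    Measurable (Function.uncurry (mixedDiff h b)) :=
  ((hh.sub (hh.comp (measurable_fst.prodMk measurable_const))).sub
    (hh.comp (measurable_const.prodMk measurable_snd))).add measurable_const

theorem IsCoupling.integral_eq_integral_mixedDiff_add {γ : Measure (α × β)} [IsFiniteMeasure γ]
    {μ₁ : Measure α} {μ₂ : Measure β} (hγ : IsCoupling γ μ₁ μ₂) {h : α × β → ℝ}
    (hhm : Measurable h) {C : ℝ} (hC : ∀ p, |h p| ≤ C) (b : α × β) :
    ∫ p, h p ∂γ = ∫ p, mixedDiff h b p.1 p.2 ∂γ +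
      (∫ x, h (x, b.2) ∂μ₁ + ∫ y, h (b.1, y) ∂μ₂ - ∫ _x, h b ∂μ₁) := by
  have hm₁ : Measurable fun x => h (x, b.2) := hhm.comp (measurable_id.prodMk measurable_const)
  have hm₂ : Measurable fun y => h (b.1, y) := hhm.comp (measurable_const.prodMk measurable_id)
  have i₀ : Integrable h γ := hhm.integrable_of_abs_le hC
  have i₁ : Integrable (fun p : α × β => h (p.1, b.2)) γ :=
    (hm₁.comp measurable_fst).integrable_of_abs_le fun _ => hC _
  have i₂ : Integrable (fun p : α × β => h (b.1, p.2)) γ :=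
    (hm₂.comp measurable_snd).integrable_of_abs_le fun _ => hC _
  have i₀₁ : Integrable (fun p => h p - h (p.1, b.2)) γ := i₀.sub i₁
  have i₀₁₂ : Integrable (fun p => h p - h (p.1, b.2) - h (b.1, p.2)) γ := i₀₁.sub i₂
  rw [← hγ.integral_comp_fst hm₁, ← hγ.integral_comp_snd hm₂,
    ← hγ.integral_comp_fst (measurable_const (a := h b))]
  simp only [mixedDiff, Prod.mk.eta]
  rw [integral_add i₀₁₂ (integrable_const _), integral_sub i₀₁ i₂, integral_sub i₀ i₁]
  ring

end Supermodular

theorem integral_le_integral_of_supermodularOn {a₁ b₁ a₂ b₂ : ℝ} (hab₁ : a₁ ≤ b₁)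
    (hab₂ : a₂ ≤ b₂) {μ₁ μ₂ : Measure ℝ} [IsFiniteMeasure μ₁] [IsFiniteMeasure μ₂]
    (hμ₁ : μ₁ (Icc a₁ b₁)ᶜ = 0) (hμ₂ : μ₂ (Icc a₂ b₂)ᶜ = 0) {γ γ' : Measure (ℝ × ℝ)}
    [IsFiniteMeasure γ] [IsFiniteMeasure γ'] (hγ : IsCoupling γ μ₁ μ₂) (hγ' : IsCoupling γ' μ₁ μ₂)
    (hcdf : ∀ p, γ.real (Iic p) ≤ γ'.real (Iic p)) {h : ℝ × ℝ → ℝ} (hhm : Measurable h) {C : ℝ}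
    (hC : ∀ p, |h p| ≤ C) (hh : SupermodularOn h (Icc (a₁, a₂) (b₁, b₂))) :
    ∫ p, h p ∂γ ≤ ∫ p, h p ∂γ' := by
  rw [hγ.integral_eq_integral_mixedDiff_add hhm hC (b₁, b₂),
    hγ'.integral_eq_integral_mixedDiff_add hhm hC (b₁, b₂)]
  gcongr 1
  rw [← Icc_prod_Icc] at hh
  exact integral_le_integral_of_twoIncreasingOn hab₁ hab₂ hμ₁ hμ₂ hγ hγ' hcdf
    (hh.twoIncreasingOn.mixedDiff (b₁, b₂)) (hhm.uncurry_mixedDiff (b₁, b₂))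
    (abs_mixedDiff_le hC (b₁, b₂)) (mixedDiff_fst_self h (b₁, b₂)) (mixedDiff_snd_self h (b₁, b₂))

section Quantile

noncomputable def quantile (μ : Measure ℝ) (u : ℝ) : ℝ := sInf {x | u ≤ cdf μ x}

variable (μ : Measure ℝ)

theorem bddBelow_setOf_le_cdf {u : ℝ} (hu : 0 < u) : BddBelow {x | u ≤ cdf μ x} := by
  obtain ⟨l, hl⟩ := eventually_atBot.1 ((tendsto_cdf_atBot μ).eventually (gt_mem_nhds hu))
  exact ⟨l, fun x hx => le_of_not_gt fun hxl => (hl x hxl.le).not_ge hx⟩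

theorem nonempty_setOf_le_cdf {u : ℝ} (hu : u < 1) : {x | u ≤ cdf μ x}.Nonempty :=
  ((tendsto_cdf_atTop μ).eventually (lt_mem_nhds hu)).exists.imp fun _ hx => hx.le

theorem le_cdf_quantile {u : ℝ} (hu : u ∈ Ioo 0 1) : u ≤ cdf μ (quantile μ u) :=
  ge_of_tendsto (((cdf μ).right_continuous _).mono Ioi_subset_Ici_self)
    (eventually_nhdsWithin_of_forall fun y hy => by
      obtain ⟨z, hz, hzy⟩ := exists_lt_of_csInf_lt (nonempty_setOf_le_cdf μ hu.2) hy
      exact hz.trans ((cdf μ).mono hzy.le))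

theorem quantile_le_iff {u : ℝ} (hu : u ∈ Ioo 0 1) (x : ℝ) :
    quantile μ u ≤ x ↔ u ≤ cdf μ x :=
  ⟨fun h => (le_cdf_quantile μ hu).trans ((cdf μ).mono h),
    fun h => csInf_le (bddBelow_setOf_le_cdf μ hu.1) h⟩

theorem monotoneOn_quantile : MonotoneOn (quantile μ) (Ioo 0 1) := fun _ hu _ hv huv =>
  (quantile_le_iff μ hu _).2 (huv.trans (le_cdf_quantile μ hv))

theorem aemeasurable_quantile : AEMeasurable (quantile μ) (volume.restrict (Ioo 0 1)) :=
  aemeasurable_restrict_of_monotoneOn measurableSet_Ioo (monotoneOn_quantile μ)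

theorem volume_Iic_inter_Ioo {c : ℝ} (hc : c ∈ Icc (0 : ℝ) 1) :
    volume (Iic c ∩ Ioo 0 1) = ENNReal.ofReal c := by
  refine le_antisymm ?_ ?_
  · calc volume (Iic c ∩ Ioo 0 1) ≤ volume (Ioc 0 c) :=
          measure_mono fun u hu => ⟨hu.2.1, hu.1⟩
      _ = ENNReal.ofReal c := by rw [Real.volume_Ioc, sub_zero]
  · calc ENNReal.ofReal c = volume (Ioo 0 c) := by rw [Real.volume_Ioo, sub_zero]
      _ ≤ volume (Iic c ∩ Ioo 0 1) :=
          measure_mono fun u hu => ⟨hu.2.le, hu.1, hu.2.trans_le hc.2⟩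

variable [IsProbabilityMeasure μ]

theorem map_quantile : (volume.restrict (Ioo 0 1)).map (quantile μ) = μ := by
  refine (Measure.ext_of_Iic μ _ fun x => ?_).symm
  have hpre : quantile μ ⁻¹' Iic x ∩ Ioo 0 1 = Iic (cdf μ x) ∩ Ioo 0 1 := by
    ext u
    exact and_congr_left fun hu => quantile_le_iff μ hu x
  rw [Measure.map_apply_of_aemeasurable (aemeasurable_quantile μ) measurableSet_Iic,
    Measure.restrict_apply' measurableSet_Ioo, hpre,
    volume_Iic_inter_Ioo ⟨cdf_nonneg μ x, cdf_le_one μ x⟩, cdf_eq_real, ofReal_measureReal]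

end Quantile

section MonotoneCoupling

noncomputable def monotoneCoupling (μ₁ μ₂ : Measure ℝ) : Measure (ℝ × ℝ) :=
  (volume.restrict (Ioo 0 1)).map fun u => (quantile μ₁ u, quantile μ₂ u)

variable (μ₁ μ₂ : Measure ℝ)

theorem aemeasurable_quantile_prod :
    AEMeasurable (fun u => (quantile μ₁ u, quantile μ₂ u)) (volume.restrict (Ioo 0 1)) :=
  (aemeasurable_quantile μ₁).prodMk (aemeasurable_quantile μ₂)

instance : IsFiniteMeasure (monotoneCoupling μ₁ μ₂) := by
  unfold monotoneCoupling; infer_instance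

theorem monotoneCoupling_real_Iic (x y : ℝ) :
    (monotoneCoupling μ₁ μ₂).real (Iic (x, y)) = min (cdf μ₁ x) (cdf μ₂ y) := by
  have hpre : (fun u => (quantile μ₁ u, quantile μ₂ u)) ⁻¹' Iic (x, y) ∩ Ioo 0 1 =
      Iic (min (cdf μ₁ x) (cdf μ₂ y)) ∩ Ioo 0 1 := by
    ext u
    simp only [mem_inter_iff, mem_preimage, mem_Iic, Prod.mk_le_mk, le_min_iff]
    exact and_congr_left fun hu => and_congr (quantile_le_iff μ₁ hu x) (quantile_le_iff μ₂ hu y)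
  have hmin : min (cdf μ₁ x) (cdf μ₂ y) ∈ Icc (0 : ℝ) 1 :=
    ⟨le_min (cdf_nonneg μ₁ x) (cdf_nonneg μ₂ y), min_le_of_left_le (cdf_le_one μ₁ x)⟩
  rw [measureReal_def, monotoneCoupling,
    Measure.map_apply_of_aemeasurable (aemeasurable_quantile_prod μ₁ μ₂) measurableSet_Iic,
    Measure.restrict_apply' measurableSet_Ioo, hpre, volume_Iic_inter_Ioo hmin,
    ENNReal.toReal_ofReal hmin.1]

variable [IsProbabilityMeasure μ₁] [IsProbabilityMeasure μ₂]

theorem isCoupling_monotoneCoupling : IsCoupling (monotoneCoupling μ₁ μ₂) μ₁ μ₂ := by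
  constructor
  · rw [monotoneCoupling, AEMeasurable.map_map_of_aemeasurable measurable_fst.aemeasurable
      (aemeasurable_quantile_prod μ₁ μ₂)]
    exact map_quantile μ₁
  · rw [monotoneCoupling, AEMeasurable.map_map_of_aemeasurable measurable_snd.aemeasurable
      (aemeasurable_quantile_prod μ₁ μ₂)]
    exact map_quantile μ₂

theorem IsCoupling.real_Iic_le_monotoneCoupling {γ : Measure (ℝ × ℝ)} [IsFiniteMeasure γ]
    (hγ : IsCoupling γ μ₁ μ₂) (p : ℝ × ℝ) :
    γ.real (Iic p) ≤ (monotoneCoupling μ₁ μ₂).real (Iic p) := by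
  rw [monotoneCoupling_real_Iic, cdf_eq_real, cdf_eq_real]
  exact hγ.real_Iic_le p.1 p.2 measurableSet_Iic measurableSet_Iic

end MonotoneCoupling

theorem le_of_measure_compl_Icc_eq_zero {μ : Measure ℝ} [IsProbabilityMeasure μ] {a b : ℝ}
    (h : μ (Icc a b)ᶜ = 0) : a ≤ b := by
  by_contra hab
  rw [Icc_eq_empty hab, compl_empty, measure_univ] at h
  exact one_ne_zero h

/-- The monotone (comonotone) coupling of two distributions: it has the
prescribed marginals, its joint CDF is `min (F₁ x) (F₂ y)`, and it is maximal in the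
supermodular order among all couplings of `(F₁, F₂)`. -/
theorem monotone_coupling_properties
    (a₁ b₁ a₂ b₂ : ℝ)
    (μ₁ μ₂ : Measure ℝ) [IsProbabilityMeasure μ₁] [IsProbabilityMeasure μ₂]
    (hsupp₁ : μ₁ (Set.Icc a₁ b₁)ᶜ = 0) (hsupp₂ : μ₂ (Set.Icc a₂ b₂)ᶜ = 0)
    (F₁ F₂ : ℝ → ℝ)
    (hF₁ : ∀ x, F₁ x = (μ₁ (Set.Iic x)).toReal)
    (hF₂ : ∀ x, F₂ x = (μ₂ (Set.Iic x)).toReal)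
    (q₁ q₂ : ℝ → ℝ)
    (hq₁ : ∀ u, q₁ u = sInf {x | u ≤ F₁ x})
    (hq₂ : ∀ u, q₂ u = sInf {x | u ≤ F₂ x})
    (M : Measure (ℝ × ℝ))
    (hM : M = (volume.restrict (Set.Icc (0:ℝ) 1)).map (fun u => (q₁ u, q₂ u))) :
    M.map Prod.fst = μ₁ ∧ M.map Prod.snd = μ₂ ∧
    (∀ x y : ℝ, (M (Set.Iic (x, y))).toReal = min (F₁ x) (F₂ y)) ∧
    (∀ μ : Measure (ℝ × ℝ), IsProbabilityMeasure μ →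
      μ (Set.Icc (a₁, a₂) (b₁, b₂))ᶜ = 0 →
      μ.map Prod.fst = μ₁ → μ.map Prod.snd = μ₂ →
      ∀ h : ℝ × ℝ → ℝ, Measurable h → (∃ C, ∀ p, |h p| ≤ C) →
        (∀ p ∈ Set.Icc (a₁, a₂) (b₁, b₂), ∀ q ∈ Set.Icc (a₁, a₂) (b₁, b₂),
          h p + h q ≤ h (p ⊔ q) + h (p ⊓ q)) →
        ∫ p, h p ∂μ ≤ ∫ p, h p ∂M) := by
  obtain rfl : F₁ = cdf μ₁ := funext fun x => by rw [hF₁, cdf_eq_real, measureReal_def]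
  obtain rfl : F₂ = cdf μ₂ := funext fun x => by rw [hF₂, cdf_eq_real, measureReal_def]
  obtain rfl : q₁ = quantile μ₁ := funext hq₁
  obtain rfl : q₂ = quantile μ₂ := funext hq₂
  obtain rfl : M = monotoneCoupling μ₁ μ₂ := by
    rw [hM, Measure.restrict_congr_set Ioo_ae_eq_Icc.symm, monotoneCoupling]
  refine ⟨(isCoupling_monotoneCoupling μ₁ μ₂).1, (isCoupling_monotoneCoupling μ₁ μ₂).2,
    monotoneCoupling_real_Iic μ₁ μ₂, ?_⟩
  intro μ _ _ hμ₁ hμ₂ h hhm ⟨C, hC⟩ hh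
  have hμ : IsCoupling μ μ₁ μ₂ := ⟨hμ₁, hμ₂⟩
  exact integral_le_integral_of_supermodularOn (le_of_measure_compl_Icc_eq_zero hsupp₁)
    (le_of_measure_compl_Icc_eq_zero hsupp₂) hsupp₁ hsupp₂ hμ (isCoupling_monotoneCoupling μ₁ μ₂)
    (hμ.real_Iic_le_monotoneCoupling μ₁ μ₂) hhm hC hh
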